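/- Let Λ = ℚ[p_1, p_2, …] be the polynomial ring over ℚ in countably many variables p_k indexed by positive integers. Define e_m ∈ Λ by e_0 = 1 and the Newton recurrence m·e_m = Σ_{i=1}^m (−1)^{i−1} p_i·e_{m−i} for m ≥ 1, and for n ≥ 1 let D_n be the unique ℚ-linear derivation of Λ with D_n(p_k) = k^n for all k ≥ 1. Then for all n ≥ 1 and m ≥ 1, D_n(e_m) = Σ_{k=1}^m (−1)^{k+1} k^{n−1}·e_{m−k}. -/

import Mathlib

/-!
Apply `D_n` to the Newton recurrence `m e_m = Σ_i (-1)^{i-1} p_i e_{m-i}`. By the Leibniz rule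
the right side becomes `Σ_k (-1)^{k+1} k^n e_{m-k} + Σ_i (-1)^{i-1} p_i D_n(e_{m-i})`. By strong
induction on `m`, substitute the claimed formula into the second sum; exchanging the two sums turns
it into `Σ_k (-1)^{k+1} k^{n-1} (m-k) e_{m-k}`, by the recurrence again. Since
`k^n + k^{n-1}(m-k) = m k^{n-1}` for `n ≥ 1`, dividing by `m` gives the formula for `D_n(e_m)`.
-/

open MvPolynomial

/-- The derivation `D_n` of `Λ = ℚ[p_1, p_2, …]` with `D_n(p_k) = k^n` for all `k ≥ 1`. -/
noncomputable def Dn (n : ℕ) : Derivation ℚ (MvPolynomial ℕ+ ℚ) (MvPolynomial ℕ+ ℚ) :=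
  mkDerivation ℚ fun k : ℕ+ => C (((k : ℕ) : ℚ) ^ n)

open Finset

theorem Finset.sum_Icc_one_eq_sum_range {M : Type*} [AddCommMonoid M] (m : ℕ) (f : ℕ → M) :
    ∑ k ∈ Icc 1 m, f k = ∑ i ∈ range m, f (i + 1) := by
  rw [← Ico_add_one_right_eq_Icc, sum_Ico_eq_sum_range]
  simp [add_comm]

theorem Finset.sum_range_mul_sum_Icc_comm {R : Type*} [CommSemiring R] (a b G : ℕ → R) (m : ℕ) :
    ∑ i ∈ range m, a i * ∑ k ∈ Icc 1 (m - (i + 1)), b k * G (m - (i + 1) - k) =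
      ∑ k ∈ Icc 1 m, b k * ∑ i ∈ range (m - k), a i * G (m - k - (i + 1)) := by
  simp only [mul_sum]
  rw [sum_comm' (t' := Icc 1 m) (s' := fun k => range (m - k))]
  · refine sum_congr rfl fun k _ => sum_congr rfl fun i _ => ?_
    rw [Nat.sub_right_comm]
    ring
  · intro i k
    simp only [mem_range, mem_Icc]
    omega

theorem Dn_X (n : ℕ) (j : ℕ+) : Dn n (X j) = C (((j : ℕ) : ℚ) ^ n) :=
  mkDerivation_X ℚ _ j

theorem Dn_C_mul (n : ℕ) (a : ℚ) (f : MvPolynomial ℕ+ ℚ) : Dn n (C a * f) = C a * Dn n f := by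
  rw [← smul_eq_C_mul, Derivation.map_smul, smul_eq_C_mul]

/-- The right-hand side `Σ_{i=1}^m (-1)^{i-1} p_i G_{m-i}` of the Newton recurrence. -/
noncomputable def newtonSum (G : ℕ → MvPolynomial ℕ+ ℚ) (m : ℕ) : MvPolynomial ℕ+ ℚ :=
  ∑ i ∈ range m, C ((-1 : ℚ) ^ i) * (X i.succPNat * G (m - (i + 1)))

theorem newtonSum_zero (G : ℕ → MvPolynomial ℕ+ ℚ) : newtonSum G 0 = 0 := sum_range_zero _

/-- The value `Σ_{k=1}^m (-1)^{k+1} k^{n-1} G_{m-k}` claimed for `D_n(e_m)`. -/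
noncomputable def hookSum (n : ℕ) (G : ℕ → MvPolynomial ℕ+ ℚ) (m : ℕ) : MvPolynomial ℕ+ ℚ :=
  ∑ k ∈ Icc 1 m, C ((-1 : ℚ) ^ (k + 1) * (k : ℚ) ^ (n - 1)) * G (m - k)

theorem Dn_newtonSum (n : ℕ) (G : ℕ → MvPolynomial ℕ+ ℚ) (m : ℕ) :
    Dn n (newtonSum G m) =
      ∑ k ∈ Icc 1 m, C ((-1 : ℚ) ^ (k + 1) * (k : ℚ) ^ n) * G (m - k) +
        newtonSum (fun j => Dn n (G j)) m := by
  rw [sum_Icc_one_eq_sum_range, newtonSum, newtonSum, map_sum, ← sum_add_distrib]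
  refine sum_congr rfl fun i _ => ?_
  rw [Dn_C_mul, Derivation.leibniz, Dn_X]
  simp only [smul_eq_mul, Nat.succPNat_coe, map_mul, map_pow, map_neg, map_one]
  push_cast
  ring

theorem newtonSum_hookSum (n : ℕ) (G : ℕ → MvPolynomial ℕ+ ℚ) (m : ℕ) :
    newtonSum (hookSum n G) m =
      ∑ k ∈ Icc 1 m, C ((-1 : ℚ) ^ (k + 1) * (k : ℚ) ^ (n - 1)) * newtonSum G (m - k) := by
  simp only [newtonSum, hookSum, ← mul_assoc]
  exact sum_range_mul_sum_Icc_comm (fun i => C ((-1 : ℚ) ^ i) * X i.succPNat) _ G m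

theorem smul_hookSum (n : ℕ) (hn : 1 ≤ n) (G : ℕ → MvPolynomial ℕ+ ℚ) (m : ℕ) :
    (m : ℚ) • hookSum n G m =
      ∑ k ∈ Icc 1 m, C ((-1 : ℚ) ^ (k + 1) * (k : ℚ) ^ n) * G (m - k) +
        ∑ k ∈ Icc 1 m,
          C ((-1 : ℚ) ^ (k + 1) * (k : ℚ) ^ (n - 1)) * (((m - k : ℕ) : ℚ) • G (m - k)) := by
  obtain ⟨n, rfl⟩ : ∃ n', n = n' + 1 := ⟨n - 1, by omega⟩
  rw [hookSum, smul_sum, ← sum_add_distrib]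
  refine sum_congr rfl fun k hk => ?_
  rw [Nat.cast_sub (mem_Icc.mp hk).2]
  simp only [smul_eq_C_mul, Nat.add_sub_cancel, map_mul, map_pow, map_sub, map_neg, map_one,
    map_natCast]
  ring

theorem Dn_eq_hookSum {E : ℕ → MvPolynomial ℕ+ ℚ} (E0 : E 0 = 1)
    (Erec : ∀ m : ℕ, (m : ℚ) • E m = newtonSum E m) {n : ℕ} (hn : 1 ≤ n) (m : ℕ) :
    Dn n (E m) = hookSum n E m := by
  induction m using Nat.strong_induction_on with
  | _ m ih =>
  rcases Nat.eq_zero_or_pos m with rfl | hm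
  · simp [E0, hookSum]
  have hDE : newtonSum (fun j => Dn n (E j)) m = newtonSum (hookSum n E) m :=
    sum_congr rfl fun i _ => by simp only [ih _ (Nat.sub_lt hm (Nat.succ_pos i))]
  refine smul_right_injective _ (Nat.cast_ne_zero.mpr hm.ne' : (m : ℚ) ≠ 0) ?_
  calc (m : ℚ) • Dn n (E m) = Dn n (newtonSum E m) := by rw [← Derivation.map_smul, Erec]
    _ = (m : ℚ) • hookSum n E m := by
      rw [Dn_newtonSum, hDE, newtonSum_hookSum, smul_hookSum n hn]
      simp only [Erec]

theorem stmt4_general (E : ℕ → MvPolynomial ℕ+ ℚ) (E0 : E 0 = 1)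
    (Erec : ∀ m : ℕ, 1 ≤ m → (m : ℚ) • E m =
      ∑ i ∈ Finset.range m, C ((-1 : ℚ) ^ i) * (X i.succPNat * E (m - (i + 1))))
    (n m : ℕ) (hn : 1 ≤ n) :
    Dn n (E m) =
      ∑ k ∈ Finset.Icc 1 m, C ((-1 : ℚ) ^ (k + 1) * (k : ℚ) ^ (n - 1)) * E (m - k) := by
  refine Dn_eq_hookSum E0 (fun m => ?_) hn m
  rcases Nat.eq_zero_or_pos m with rfl | hm
  · rw [Nat.cast_zero, zero_smul, newtonSum_zero]
  · exact Erec m hm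

/-- If `e_0 = 1` and `m·e_m = Σ_{i=1}^m (-1)^{i-1}·p_i·e_{m-i}` for `m ≥ 1` (the signed Newton
recurrence, which characterizes the elementary symmetric functions in the power-sum generators),
then `D_n(e_m) = Σ_{k=1}^m (-1)^{k+1}·k^{n-1}·e_{m-k}` for all `n, m ≥ 1`. -/
theorem stmt4 (E : ℕ → MvPolynomial ℕ+ ℚ) (E0 : E 0 = 1)
    (Erec : ∀ m : ℕ, 1 ≤ m → (m : ℚ) • E m =
      ∑ i ∈ Finset.range m, C ((-1 : ℚ) ^ i) * (X i.succPNat * E (m - (i + 1))))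
    (n m : ℕ) (hn : 1 ≤ n) (hm : 1 ≤ m) :
    Dn n (E m) =
      ∑ k ∈ Finset.Icc 1 m, C ((-1 : ℚ) ^ (k + 1) * (k : ℚ) ^ (n - 1)) * E (m - k) :=
  stmt4_general E E0 Erec n m hn
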